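/- Let 𝓕 ∈ FHC. The following are equivalent: (a) 𝓕 and 𝓕^⊥ are geometric duals, i.e., for every x ∈ c₀₀, ‖x‖_𝓕 = sup{ |Σ_n x(n)·y(n)| : y ∈ c₀₀, ‖y‖_{𝓕^⊥} ≤ 1 }; (b) there exists a perfect simple graph G on ℕ such that 𝓕 = 𝓒(G), the family of finite cliques of G. -/

import Mathlib

open scoped ENNReal

/-- A family of finite subsets of ℕ which is hereditary and covers ℕ. -/
def FHC (F : Set (Finset ℕ)) : Prop :=
  (∀ ⦃E S : Finset ℕ⦄, E ⊆ S → S ∈ F → E ∈ F) ∧ (∀ n : ℕ, {n} ∈ F)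

/-- The orthogonal family: finite sets meeting every member of `F` in at most one point. -/
def perp (F : Set (Finset ℕ)) : Set (Finset ℕ) :=
  {E | ∀ S ∈ F, (E ∩ S).card ≤ 1}

/-- The combinatorial extended norm generated by a family of finite sets. -/
noncomputable def combNorm (F : Set (Finset ℕ)) (x : ℕ → ℝ) : ℝ≥0∞ :=
  ⨆ S ∈ F, ENNReal.ofReal (∑ i ∈ S, |x i|)

/-- `sup { |Σ x(n)·y(n)| : y ∈ c₀₀, ‖y‖_H ≤ 1 }`. -/
noncomputable def dualNorm (H : Set (Finset ℕ)) (x : ℕ → ℝ) : ℝ≥0∞ :=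
  ⨆ y ∈ {y : ℕ → ℝ | (Function.support y).Finite ∧ combNorm H y ≤ 1},
    ENNReal.ofReal |∑ᶠ n, x n * y n|

/-- The family of finite cliques of a graph on ℕ. -/
def cliques (G : SimpleGraph ℕ) : Set (Finset ℕ) :=
  {C | G.IsClique (C : Set ℕ)}

/-- The chromatic number of a finite graph. -/
noncomputable def chromNum {V : Type*} [Fintype V] (G : SimpleGraph V) : ℕ :=
  sInf {n | G.Colorable n}

/-- The clique number of a finite graph. -/
noncomputable def cliqNum {V : Type*} [Fintype V] (G : SimpleGraph V) : ℕ :=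
  sSup {n | ∃ s : Finset V, G.IsNClique n s}

/-- A graph on ℕ is perfect if on every nonempty finite induced subgraph the chromatic
number equals the clique number. -/
def IsPerfect (G : SimpleGraph ℕ) : Prop :=
  ∀ H : Finset ℕ, H.Nonempty →
    chromNum (G.induce (H : Set ℕ)) = cliqNum (G.induce (H : Set ℕ))


/-! ### Auxiliary development -/

open Finset
open scoped Classical

section Aux
variable (G : SimpleGraph ℕ)

/-- A stable (independent) set. -/
def Stab (A : Finset ℕ) : Prop := ∀ ⦃u⦄, u ∈ A → ∀ ⦃v⦄, v ∈ A → ¬ G.Adj u v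

/-- Finset of finite cliques inside `V`. -/
noncomputable def clqs (V : Finset ℕ) : Finset (Finset ℕ) :=
  V.powerset.filter (fun C => G.IsClique (C : Set ℕ))

/-- Clique number within a finite set. -/
noncomputable def omF (H : Finset ℕ) : ℕ := (clqs G H).sup Finset.card

/-- Independence number within a finite set. -/
noncomputable def alF (H : Finset ℕ) : ℕ :=
  (H.powerset.filter (fun A => Stab G A)).sup Finset.card

/-- `H` can be covered by `n` stable sets. -/
def CovH (H : Finset ℕ) (n : ℕ) : Prop :=
  ∃ f : Fin n → Finset ℕ, (∀ i, Stab G (f i)) ∧ ∀ v ∈ H, ∃ i, v ∈ f i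

/-- Weighted covering by `k` stable sets. -/
def CovW (w : ℕ → ℕ) (k : ℕ) : Prop :=
  ∃ f : Fin k → Finset ℕ, (∀ i, Stab G (f i)) ∧
    ∀ v, w v ≤ (Finset.univ.filter (fun i => v ∈ f i)).card

/-- Weighted clique number. -/
noncomputable def omW (V : Finset ℕ) (w : ℕ → ℕ) : ℕ :=
  (clqs G V).sup (fun C => ∑ v ∈ C, w v)

variable {G}

lemma empty_mem_clqs (V : Finset ℕ) : ∅ ∈ clqs G V := by
  simp [clqs, SimpleGraph.IsClique]

lemma mem_clqs {V C : Finset ℕ} : C ∈ clqs G V ↔ C ⊆ V ∧ G.IsClique (C : Set ℕ) := by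
  simp [clqs]

lemma stab_inter_card_le {A C : Finset ℕ} (hA : Stab G A) (hC : G.IsClique (C : Set ℕ)) :
    (C ∩ A).card ≤ 1 := by
  by_contra h
  push_neg at h
  obtain ⟨a, ha, b, hb, hab⟩ := Finset.one_lt_card.mp h
  simp only [Finset.mem_inter] at ha hb
  exact hA ha.2 hb.2 (hC (Finset.mem_coe.mpr ha.1) (Finset.mem_coe.mpr hb.1) hab)

lemma le_omW {V C : Finset ℕ} {w : ℕ → ℕ} (h : C ∈ clqs G V) : ∑ v ∈ C, w v ≤ omW G V w :=
  Finset.le_sup (f := fun C => ∑ v ∈ C, w v) h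

lemma exists_omW (V : Finset ℕ) (w : ℕ → ℕ) : ∃ C ∈ clqs G V, ∑ v ∈ C, w v = omW G V w := by
  obtain ⟨C, hC, h⟩ := Finset.exists_mem_eq_sup (clqs G V) ⟨∅, empty_mem_clqs V⟩
    (fun C => ∑ v ∈ C, w v)
  exact ⟨C, hC, h.symm⟩

lemma le_omF {H C : Finset ℕ} (h : C ∈ clqs G H) : C.card ≤ omF G H := Finset.le_sup h

lemma exists_omF (H : Finset ℕ) : ∃ C ∈ clqs G H, C.card = omF G H := by
  obtain ⟨C, hC, h⟩ := Finset.exists_mem_eq_sup (clqs G H) ⟨∅, empty_mem_clqs H⟩ Finset.card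
  exact ⟨C, hC, h.symm⟩

lemma exists_alF (H : Finset ℕ) : ∃ A, A ⊆ H ∧ Stab G A ∧ A.card = alF G H := by
  obtain ⟨A, hA, h⟩ := Finset.exists_mem_eq_sup (H.powerset.filter (fun A => Stab G A))
    ⟨∅, by simp only [Finset.mem_filter, Finset.mem_powerset]; exact ⟨Finset.empty_subset _, by simp [Stab]⟩⟩ Finset.card
  simp only [Finset.mem_filter, Finset.mem_powerset] at hA
  exact ⟨A, hA.1, hA.2, h.symm⟩

lemma le_alF {H A : Finset ℕ} (hA : A ⊆ H) (hs : Stab G A) : A.card ≤ alF G H :=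
  Finset.le_sup (by simp only [Finset.mem_filter, Finset.mem_powerset]; exact ⟨hA, hs⟩)

lemma covH_mono {H : Finset ℕ} {n m : ℕ} (h : CovH G H n) (hnm : n ≤ m) : CovH G H m := by
  obtain ⟨f, hst, hcov⟩ := h
  refine ⟨fun i => if h : (i : ℕ) < n then f ⟨i, h⟩ else ∅, fun i => ?_, fun v hv => ?_⟩
  · dsimp only; split
    · exact hst _
    · intro u hu; simp at hu
  · obtain ⟨i, hi⟩ := hcov v hv
    refine ⟨⟨i, lt_of_lt_of_le i.2 hnm⟩, ?_⟩
    simpa [i.2] using hi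

lemma covW_mono {w : ℕ → ℕ} {n m : ℕ} (h : CovW G w n) (hnm : n ≤ m) : CovW G w m := by
  obtain ⟨f, hst, hcov⟩ := h
  refine ⟨fun i => if h : (i : ℕ) < n then f ⟨i, h⟩ else ∅, fun i => ?_, fun v => ?_⟩
  · dsimp only; split
    · exact hst _
    · intro u hu; simp at hu
  · refine (hcov v).trans ?_
    apply Finset.card_le_card_of_injOn (fun i => Fin.castLE hnm i)
    · intro i hi
      rw [Finset.mem_coe] at hi ⊢
      simp only [Finset.mem_filter, Finset.mem_univ, true_and] at hi ⊢
      have h2 : ((Fin.castLE hnm i : Fin m) : ℕ) < n := i.2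
      rw [dif_pos h2]
      simpa using hi
    · intro a _ b _ hab
      exact Fin.castLE_injective hnm hab

/-- Translation: covering by stable sets iff colorability of the induced graph. -/
lemma covH_iff_colorable {H : Finset ℕ} {n : ℕ} :
    CovH G H n ↔ (G.induce (H : Set ℕ)).Colorable n := by
  constructor
  · rintro ⟨f, hst, hcov⟩
    have hc : ∀ v : (H : Set ℕ), ∃ i, (v : ℕ) ∈ f i :=
      fun v => hcov v (Finset.mem_coe.mp v.2)
    refine ⟨SimpleGraph.Coloring.mk (fun v => (hc v).choose) ?_⟩
    intro u v hadj heq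
    have h1 : (u : ℕ) ∈ f (hc u).choose := (hc u).choose_spec
    have h2 : (v : ℕ) ∈ f (hc u).choose := by
      rw [show (hc u).choose = (hc v).choose from heq]
      exact (hc v).choose_spec
    exact hst _ h1 h2 hadj
  · rintro ⟨c⟩
    refine ⟨fun i => H.filter (fun v => ∃ h : v ∈ H, c ⟨v, Finset.mem_coe.mpr h⟩ = i),
      fun i => ?_, fun v hv => ?_⟩
    · intro u hu v' hv' hadj
      simp only [Finset.mem_filter] at hu hv'
      obtain ⟨hu1, hu2, hu3⟩ := hu
      obtain ⟨hv1, hv2, hv3⟩ := hv'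
      have : (G.induce (H : Set ℕ)).Adj ⟨u, Finset.mem_coe.mpr hu1⟩ ⟨v', Finset.mem_coe.mpr hv1⟩ :=
        hadj
      exact c.valid this (hu3.trans hv3.symm)
    · exact ⟨c ⟨v, Finset.mem_coe.mpr hv⟩, by simp [hv]⟩

lemma chromNum_le_iff {H : Finset ℕ} {n : ℕ} :
    chromNum (G.induce (H : Set ℕ)) ≤ n ↔ CovH G H n := by
  rw [covH_iff_colorable]
  constructor
  · intro h
    have h0 : (G.induce (H : Set ℕ)).Colorable (chromNum (G.induce (H : Set ℕ))) := by
      have hne : {m | (G.induce (H : Set ℕ)).Colorable m}.Nonempty :=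
        ⟨_, SimpleGraph.colorable_of_fintype _⟩
      exact Nat.sInf_mem hne
    exact h0.mono h
  · intro h
    exact Nat.sInf_le h

lemma cliqNum_eq (H : Finset ℕ) : cliqNum (G.induce (H : Set ℕ)) = omF G H := by
  unfold cliqNum
  apply le_antisymm
  · have hne0 : ∃ s : Finset (H : Set ℕ), (G.induce (H : Set ℕ)).IsNClique 0 s :=
      ⟨∅, by simp⟩
    refine csSup_le ⟨0, hne0⟩ ?_
    rintro n ⟨s, hs⟩
    have hinj : Function.Injective (fun v : (H : Set ℕ) => (v : ℕ)) := Subtype.val_injective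
    have hmem : s.image (fun v : (H : Set ℕ) => (v : ℕ)) ∈ clqs G H := by
      rw [mem_clqs]
      constructor
      · intro v hv
        simp only [Finset.mem_image] at hv
        obtain ⟨u, _, rfl⟩ := hv
        exact Finset.mem_coe.mp u.2
      · intro a ha b hb hab
        simp only [Finset.coe_image, Set.mem_image] at ha hb
        obtain ⟨u, hu, rfl⟩ := ha
        obtain ⟨u', hu', rfl⟩ := hb
        have huu : u ≠ u' := fun h => hab (by rw [h])
        exact hs.1 hu hu' huu
    calc n = s.card := hs.2.symm
      _ = (s.image (fun v : (H : Set ℕ) => (v : ℕ))).card := (Finset.card_image_of_injective s hinj).symm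
      _ ≤ omF G H := le_omF hmem
  · obtain ⟨C, hC, hcard⟩ := exists_omF H
    obtain ⟨hsub, hclq⟩ := mem_clqs.mp hC
    apply le_csSup
    · refine ⟨Fintype.card (H : Set ℕ), ?_⟩
      rintro n ⟨s, hs⟩
      rw [← hs.2]
      exact Finset.card_le_card (Finset.subset_univ s) |>.trans (by simp)
    · refine ⟨C.subtype (fun v => v ∈ (H : Set ℕ)), ?_, ?_⟩
      · intro a ha b hb hab
        rw [Finset.mem_coe, Finset.mem_subtype] at ha hb
        have : (a : ℕ) ≠ (b : ℕ) := fun h => hab (Subtype.ext h)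
        exact hclq (Finset.mem_coe.mpr ha) (Finset.mem_coe.mpr hb) this
      · rw [Finset.card_subtype, ← hcard]
        congr 1
        apply Finset.filter_true_of_mem
        intro v hv
        exact Finset.mem_coe.mpr (hsub hv)

/-- Pigeonhole: a cover by `n` stable sets bounds the clique number. -/
lemma omF_le_of_covH {H : Finset ℕ} {n : ℕ} (h : CovH G H n) : omF G H ≤ n := by
  obtain ⟨f, hst, hcov⟩ := h
  obtain ⟨C, hC, hcard⟩ := exists_omF H
  obtain ⟨hsub, hclq⟩ := mem_clqs.mp hC
  rw [← hcard]
  rcases C.eq_empty_or_nonempty with rfl | ⟨v0, hv0⟩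
  · simp
  · haveI : Nonempty (Fin n) := ⟨(hcov v0 (hsub hv0)).choose⟩
    set g : ℕ → Fin n := fun v => if h : ∃ i, v ∈ f i then h.choose else Classical.arbitrary _
      with hg
    have hmemf : ∀ a ∈ C, a ∈ f (g a) := by
      intro a ha
      have hea : ∃ i, a ∈ f i := hcov a (hsub ha)
      simp only [hg]
      rw [dif_pos hea]
      exact hea.choose_spec
    calc C.card ≤ (Finset.univ : Finset (Fin n)).card := ?_
      _ = n := by simp
    apply Finset.card_le_card_of_injOn g
    · intro v _; exact Finset.mem_univ _
    · intro a ha b hb hab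
      by_contra hne
      have h1 : a ∈ f (g a) := hmemf a (Finset.mem_coe.mp ha)
      have h2 : b ∈ f (g a) := hab ▸ hmemf b (Finset.mem_coe.mp hb)
      exact hst _ h1 h2 (hclq ha hb hne)

lemma isPerfect_iff_covH {G : SimpleGraph ℕ} :
    IsPerfect G ↔ ∀ H : Finset ℕ, CovH G H (omF G H) := by
  constructor
  · intro hperf H
    rcases H.eq_empty_or_nonempty with rfl | hne
    · exact ⟨fun _ => ∅, fun i => by intro u hu; simp at hu, by simp⟩
    · have := hperf H hne
      rw [cliqNum_eq] at this
      exact chromNum_le_iff.mp (le_of_eq this)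
  · intro h H _
    rw [cliqNum_eq]
    apply le_antisymm
    · exact chromNum_le_iff.mpr (h H)
    · exact omF_le_of_covH (chromNum_le_iff.mp le_rfl)

lemma stab_subset {A B : Finset ℕ} (hAB : A ⊆ B) (h : Stab G B) : Stab G A :=
  fun _ hu _ hv => h (hAB hu) (hAB hv)

lemma omW_le {V : Finset ℕ} {w : ℕ → ℕ} {m : ℕ}
    (h : ∀ C ∈ clqs G V, ∑ v ∈ C, w v ≤ m) : omW G V w ≤ m := Finset.sup_le h

lemma covW_append {w w2 : ℕ → ℕ} {m : ℕ} (h : CovW G w2 m) {A : Finset ℕ} (hA : Stab G A)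
    (hptw : ∀ v, w v ≤ w2 v + (if v ∈ A then 1 else 0)) : CovW G w (m + 1) := by
  obtain ⟨g, hstg, hcovg⟩ := h
  refine ⟨fun i => if h : (i : ℕ) < m then g ⟨i, h⟩ else A, fun i => ?_, fun v => ?_⟩
  · dsimp only; split
    · exact hstg _
    · exact hA
  · rw [Finset.card_filter]
    rw [Fin.sum_univ_castSucc]
    have h1 : ∀ i : Fin m,
        (if v ∈ (if h : ((Fin.castSucc i : Fin (m+1)) : ℕ) < m then g ⟨(Fin.castSucc i : Fin (m+1)), h⟩ else A) then 1 else 0)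
        = (if v ∈ g i then 1 else 0) := by
      intro i
      have hlt : ((Fin.castSucc i : Fin (m+1)) : ℕ) < m := i.2
      rw [dif_pos hlt]
      congr 1
    have h2 : (if v ∈ (if h : ((Fin.last m : Fin (m+1)) : ℕ) < m then g ⟨(Fin.last m : Fin (m+1)), h⟩ else A) then 1 else 0)
        = (if v ∈ A then 1 else 0) := by
      rw [dif_neg (by simp)]
    rw [Finset.sum_congr rfl (fun i _ => h1 i), h2]
    have h3 : w2 v ≤ ∑ i : Fin m, (if v ∈ g i then 1 else 0) := by
      have := hcovg v
      rwa [Finset.card_filter] at this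
    have := hptw v
    omega

/-- Core combinatorial theorem: weighted covering for perfect graphs
(replication-free induction). -/
lemma core1 (hcov : ∀ H : Finset ℕ, CovH G H (omF G H)) (V : Finset ℕ) (w : ℕ → ℕ)
    (hw : ∀ v, v ∉ V → w v = 0) : CovW G w (omW G V w) := by
  suffices h : ∀ n (w : ℕ → ℕ), (∀ v, v ∉ V → w v = 0) → ∑ v ∈ V, w v = n →
      CovW G w (omW G V w) from h _ w hw rfl
  intro n
  induction n using Nat.strong_induction_on with
  | _ n IH =>
  intro w hw hn
  by_cases hex : ∃ u, 2 ≤ w u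
  case neg =>
    push_neg at hex
    set H := V.filter (fun v => w v = 1) with hH
    obtain ⟨f, hst, hcovf⟩ := hcov H
    have h1 : CovW G w (omF G H) := by
      refine ⟨f, hst, fun v => ?_⟩
      by_cases hv : w v = 1
      · have hvV : v ∈ V := by
          by_contra h
          exact absurd (hw v h) (by omega)
        have hvH : v ∈ H := by simp [hH, hvV, hv]
        obtain ⟨i, hi⟩ := hcovf v hvH
        have : 0 < (Finset.univ.filter (fun i => v ∈ f i)).card :=
          Finset.card_pos.mpr ⟨i, by simp [hi]⟩
        omega
      · have h2 := hex v
        have : w v = 0 := by omega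
        omega
    apply covW_mono h1
    obtain ⟨C, hC, hcard⟩ := exists_omF H
    obtain ⟨hsub, hclq⟩ := mem_clqs.mp hC
    have hCV : C ∈ clqs G V := mem_clqs.mpr ⟨hsub.trans (Finset.filter_subset _ _), hclq⟩
    have hCs : ∑ v ∈ C, w v = C.card := by
      rw [Finset.card_eq_sum_ones]
      refine Finset.sum_congr rfl (fun v hv => ?_)
      exact (Finset.mem_filter.mp (hsub hv)).2
    calc omF G H = C.card := hcard.symm
      _ = ∑ v ∈ C, w v := hCs.symm
      _ ≤ omW G V w := le_omW hCV
  case pos =>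
  obtain ⟨u, hu2⟩ := hex
  have huV : u ∈ V := by
    by_contra h
    have := hw u h
    omega
  set k := omW G V w with hk
  have hk2 : 2 ≤ k := by
    have hsing : ({u} : Finset ℕ) ∈ clqs G V := by
      rw [mem_clqs]
      exact ⟨Finset.singleton_subset_iff.mpr huV, by simp⟩
    have := le_omW (w := w) hsing
    simp only [Finset.sum_singleton] at this
    omega
  set w' : ℕ → ℕ := fun v => if v = u then w u - 1 else w v with hw'
  have hw'le : ∀ v, w' v ≤ w v := by
    intro v
    by_cases h : v = u
    · subst h; simp [hw']
    · simp [hw', h]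
  have hw'supp : ∀ v, v ∉ V → w' v = 0 := by
    intro v hv
    have hne : v ≠ u := fun h => hv (h ▸ huV)
    simp [hw', hne, hw v hv]
  have homW' : omW G V w' ≤ k := by
    apply omW_le
    intro C hC
    exact le_trans (Finset.sum_le_sum (fun v _ => hw'le v)) (le_omW hC)
  have hsum' : ∑ v ∈ V, w' v = n - 1 ∧ 1 ≤ n := by
    have h1 : w u + ∑ v ∈ V.erase u, w v = ∑ v ∈ V, w v := Finset.add_sum_erase V w huV
    have h2 : w' u + ∑ v ∈ V.erase u, w' v = ∑ v ∈ V, w' v := Finset.add_sum_erase V w' huV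
    have h3 : ∑ v ∈ V.erase u, w' v = ∑ v ∈ V.erase u, w v := by
      refine Finset.sum_congr rfl (fun v hv => ?_)
      have : v ≠ u := Finset.ne_of_mem_erase hv
      simp [hw', this]
    have h4 : w' u = w u - 1 := by simp [hw']
    omega
  obtain ⟨f0, hst0, hcov0⟩ := covW_mono (IH (n-1) (by omega) w' hw'supp hsum'.1) homW'
  set f : Fin k → Finset ℕ := fun i => (f0 i).filter (fun v => 1 ≤ w' v) with hf
  have hst : ∀ i, Stab G (f i) := fun i => stab_subset (Finset.filter_subset _ _) (hst0 i)
  have hcovf : ∀ v, w' v ≤ (Finset.univ.filter (fun i => v ∈ f i)).card := by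
    intro v
    by_cases h : 1 ≤ w' v
    · have heq : (Finset.univ.filter (fun i => v ∈ f i))
          = (Finset.univ.filter (fun i : Fin k => v ∈ f0 i)) := by
        apply Finset.filter_congr
        intro i _
        simp [hf, Finset.mem_filter, h]
      rw [heq]; exact hcov0 v
    · omega
  have htrim : ∀ i, ∀ v ∈ f i, 1 ≤ w' v := by
    intro i v hv
    exact (Finset.mem_filter.mp hv).2
  have huj : ∃ j, u ∈ f j := by
    have h1 : 1 ≤ w' u := by simp [hw']; omega
    have h2 := hcovf u
    have h3 : 0 < (Finset.univ.filter (fun i => u ∈ f i)).card := by omega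
    obtain ⟨j, hj⟩ := Finset.card_pos.mp h3
    exact ⟨j, (Finset.mem_filter.mp hj).2⟩
  obtain ⟨j, huA⟩ := huj
  set A := f j with hA
  have hA1 : Stab G A := hst j
  have hA2 : ∀ v ∈ A, 1 ≤ w v := fun v hv => le_trans (htrim j v hv) (hw'le v)
  set w2 : ℕ → ℕ := fun v => w v - (if v ∈ A then 1 else 0) with hw2
  have hw2supp : ∀ v, v ∉ V → w2 v = 0 := by
    intro v hv
    simp only [hw2]
    have := hw v hv
    omega
  have hptw : ∀ v, w2 v + (if v ∈ A then 1 else 0) = w v := by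
    intro v
    by_cases h : v ∈ A
    · have := hA2 v h
      simp only [hw2, if_pos h]
      omega
    · simp [hw2, h]
  have hsum2 : ∑ v ∈ V, w2 v < n := by
    have h1 : ∑ v ∈ V, w2 v + ∑ v ∈ V, (if v ∈ A then 1 else 0) = n := by
      rw [← Finset.sum_add_distrib, ← hn]
      exact Finset.sum_congr rfl (fun v _ => hptw v)
    have h2 : 1 ≤ ∑ v ∈ V, (if v ∈ A then 1 else 0) := by
      calc 1 = ∑ v ∈ ({u} : Finset ℕ), (if v ∈ A then 1 else 0) := by simp [huA]
        _ ≤ _ := Finset.sum_le_sum_of_subset (Finset.singleton_subset_iff.mpr huV)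
    omega
  have homW2 : omW G V w2 ≤ k - 1 := by
    apply omW_le
    intro C hC
    obtain ⟨hCV, hCclq⟩ := mem_clqs.mp hC
    have hCw : ∑ v ∈ C, w v ≤ k := le_omW hC
    have hCsplit : ∑ v ∈ C, w2 v + (C ∩ A).card = ∑ v ∈ C, w v := by
      rw [← Finset.filter_mem_eq_inter, Finset.card_filter, ← Finset.sum_add_distrib]
      exact Finset.sum_congr rfl (fun v _ => hptw v)
    by_cases huC : u ∈ C
    · have : 1 ≤ (C ∩ A).card := Finset.card_pos.mpr ⟨u, Finset.mem_inter.mpr ⟨huC, huA⟩⟩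
      omega
    · have hCw' : ∑ v ∈ C, w v = ∑ v ∈ C, w' v := by
        refine Finset.sum_congr rfl (fun v hv => ?_)
        have : v ≠ u := fun h => huC (h ▸ hv)
        simp [hw', this]
      by_cases hCk : ∑ v ∈ C, w' v ≤ k - 1
      · omega
      · have hCk' : ∑ v ∈ C, w' v = k := by
          have := le_trans (le_omW (w := w') hC) homW'
          omega
        have hdeg : ∀ v ∈ C, w' v ≤ ∑ i : Fin k, (if v ∈ f i then 1 else 0) := by
          intro v _
          have := hcovf v
          rwa [Finset.card_filter] at this
        have hcount : (k : ℕ) ≤ ∑ i : Fin k, (C ∩ f i).card := by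
          calc k = ∑ v ∈ C, w' v := hCk'.symm
            _ ≤ ∑ v ∈ C, ∑ i : Fin k, (if v ∈ f i then 1 else 0) := Finset.sum_le_sum hdeg
            _ = ∑ i : Fin k, ∑ v ∈ C, (if v ∈ f i then 1 else 0) := Finset.sum_comm
            _ = ∑ i : Fin k, (C ∩ f i).card := by
                refine Finset.sum_congr rfl (fun i _ => ?_)
                rw [← Finset.filter_mem_eq_inter, Finset.card_filter]
        have hone : ∀ i, (C ∩ f i).card ≤ 1 := fun i => stab_inter_card_le (hst i) hCclq
        have hAC : 1 ≤ (C ∩ A).card := by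
          by_contra hcon
          have hzero : (C ∩ f j).card = 0 := by
            simp only [hA] at hcon
            omega
          have hs1 : ∑ i : Fin k, (C ∩ f i).card
              = (C ∩ f j).card + ∑ i ∈ Finset.univ.erase j, (C ∩ f i).card :=
            (Finset.add_sum_erase _ _ (Finset.mem_univ j)).symm
          have hs2 : ∑ i ∈ Finset.univ.erase j, (C ∩ f i).card
              ≤ (Finset.univ.erase j).card • 1 :=
            Finset.sum_le_card_nsmul _ _ 1 (fun i _ => hone i)
          have hs3 : (Finset.univ.erase j).card = k - 1 := by
            rw [Finset.card_erase_of_mem (Finset.mem_univ j)]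
            simp
          rw [hs3, smul_eq_mul, mul_one] at hs2
          omega
        omega
  have hcov2 := covW_mono (IH (∑ v ∈ V, w2 v) hsum2 w2 hw2supp rfl) homW2
  have hfinal := covW_append hcov2 hA1 (fun v => le_of_eq (hptw v).symm)
  have hkeq : k - 1 + 1 = k := by omega
  rwa [hkeq] at hfinal

/-- Key real inequality derived from `core1` by rational approximation. -/
lemma sum_abs_mul_le (hcov : ∀ H : Finset ℕ, CovH G H (omF G H)) (x y : ℕ → ℝ)
    (s : Finset ℕ) (hy : ∀ E : Finset ℕ, Stab G E → ∑ v ∈ E, |y v| ≤ 1) :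
    ∑ v ∈ s, |x v| * |y v| ≤
      (clqs G s).sup' ⟨∅, empty_mem_clqs s⟩ (fun C => ∑ v ∈ C, |x v|) := by
  set B := (clqs G s).sup' ⟨∅, empty_mem_clqs s⟩ (fun C => ∑ v ∈ C, |x v|) with hB
  refine le_of_forall_pos_le_add ?_
  intro ε hε
  obtain ⟨N, hN⟩ := exists_nat_gt ((s.card : ℝ) / ε)
  have hNpos : (0:ℝ) < N := lt_of_le_of_lt (div_nonneg (by positivity) hε.le) hN
  set w : ℕ → ℕ := fun v => if v ∈ s then ⌈(N : ℝ) * |x v|⌉₊ else 0 with hw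
  have hwsupp : ∀ v, v ∉ s → w v = 0 := fun v hv => by simp [hw, hv]
  obtain ⟨f, hst, hcovf⟩ := core1 hcov s w hwsupp
  have hdeg : ∀ v, ((Finset.univ.filter (fun i => v ∈ f i)).card : ℝ)
      = ∑ i : Fin (omW G s w), (if v ∈ f i then (1:ℝ) else 0) := by
    intro v
    rw [Finset.card_filter]
    push_cast
    rfl
  have step1 : (N : ℝ) * ∑ v ∈ s, |x v| * |y v| ≤ ((omW G s w : ℕ) : ℝ) := by
    calc (N:ℝ) * ∑ v ∈ s, |x v| * |y v| = ∑ v ∈ s, ((N:ℝ) * |x v|) * |y v| := by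
          rw [Finset.mul_sum]
          exact Finset.sum_congr rfl (fun v _ => by ring)
      _ ≤ ∑ v ∈ s, (w v : ℝ) * |y v| := by
          apply Finset.sum_le_sum
          intro v hv
          apply mul_le_mul_of_nonneg_right _ (abs_nonneg _)
          simp only [hw, if_pos hv]
          exact Nat.le_ceil _
      _ ≤ ∑ v ∈ s, ((Finset.univ.filter (fun i => v ∈ f i)).card : ℝ) * |y v| := by
          apply Finset.sum_le_sum
          intro v _
          apply mul_le_mul_of_nonneg_right _ (abs_nonneg _)
          exact_mod_cast hcovf v
      _ = ∑ v ∈ s, ∑ i : Fin (omW G s w), (if v ∈ f i then (1:ℝ) else 0) * |y v| := by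
          refine Finset.sum_congr rfl (fun v _ => ?_)
          rw [hdeg, Finset.sum_mul]
      _ = ∑ i : Fin (omW G s w), ∑ v ∈ s, (if v ∈ f i then (1:ℝ) else 0) * |y v| := Finset.sum_comm
      _ ≤ ∑ _i : Fin (omW G s w), (1:ℝ) := by
          apply Finset.sum_le_sum
          intro i _
          have heq : ∑ v ∈ s, (if v ∈ f i then (1:ℝ) else 0) * |y v|
              = ∑ v ∈ s ∩ f i, |y v| := by
            rw [← Finset.filter_mem_eq_inter, Finset.sum_filter]
            exact Finset.sum_congr rfl (fun v _ => by by_cases h : v ∈ f i <;> simp [h])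
          rw [heq]
          exact hy _ (stab_subset Finset.inter_subset_right (hst i))
      _ = ((omW G s w : ℕ) : ℝ) := by simp
  have step2 : ((omW G s w : ℕ) : ℝ) ≤ (N:ℝ) * B + s.card := by
    obtain ⟨C, hC, hCk⟩ := exists_omW (G := G) s w
    have hCs : C ⊆ s := (mem_clqs.mp hC).1
    have hBC : ∑ v ∈ C, |x v| ≤ B := Finset.le_sup' (fun C => ∑ v ∈ C, |x v|) hC
    calc ((omW G s w : ℕ) : ℝ) = ((∑ v ∈ C, w v : ℕ) : ℝ) := by rw [hCk]
      _ = ∑ v ∈ C, (w v : ℝ) := by push_cast; rfl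
      _ ≤ ∑ v ∈ C, ((N:ℝ) * |x v| + 1) := by
          apply Finset.sum_le_sum
          intro v hv
          simp only [hw, if_pos (hCs hv)]
          exact le_of_lt (Nat.ceil_lt_add_one (by positivity))
      _ = (N:ℝ) * ∑ v ∈ C, |x v| + C.card := by
          rw [Finset.sum_add_distrib, Finset.mul_sum]
          simp
      _ ≤ (N:ℝ) * B + s.card := by
          have h1 : (C.card : ℝ) ≤ s.card := by exact_mod_cast Finset.card_le_card hCs
          nlinarith
  have hcard : (s.card : ℝ) < N * ε := by
    rw [div_lt_iff₀ hε] at hN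
    linarith
  have hfin : (N:ℝ) * (∑ v ∈ s, |x v| * |y v|) ≤ (N:ℝ) * (B + ε) := by nlinarith
  exact le_of_mul_le_mul_left hfin hNpos

end Aux

/-! ### ENNReal interface lemmas -/

lemma combNorm_le_iff {F : Set (Finset ℕ)} {x : ℕ → ℝ} {c : ℝ≥0∞} :
    combNorm F x ≤ c ↔ ∀ S ∈ F, ENNReal.ofReal (∑ i ∈ S, |x i|) ≤ c := by
  simp [combNorm, iSup₂_le_iff]

lemma le_dualNorm {H : Set (Finset ℕ)} {x y : ℕ → ℝ} (h1 : (Function.support y).Finite)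
    (h2 : combNorm H y ≤ 1) :
    ENNReal.ofReal |∑ᶠ n, x n * y n| ≤ dualNorm H x := by
  have hy : y ∈ {y : ℕ → ℝ | (Function.support y).Finite ∧ combNorm H y ≤ 1} := ⟨h1, h2⟩
  exact le_iSup₂ (f := fun y _ => ENNReal.ofReal |∑ᶠ n, x n * y n|) y hy

lemma dualNorm_le_iff {H : Set (Finset ℕ)} {x : ℕ → ℝ} {c : ℝ≥0∞} :
    dualNorm H x ≤ c ↔ ∀ y : ℕ → ℝ, (Function.support y).Finite → combNorm H y ≤ 1 →
      ENNReal.ofReal |∑ᶠ n, x n * y n| ≤ c := by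
  simp only [dualNorm, iSup₂_le_iff, Set.mem_setOf_eq, and_imp]

/-- The easy inequality: `combNorm F x ≤ dualNorm (perp F) x`, fully general. -/
lemma combNorm_le_dualNorm (F : Set (Finset ℕ)) (x : ℕ → ℝ) :
    combNorm F x ≤ dualNorm (perp F) x := by
  rw [combNorm_le_iff]
  intro S hS
  set y : ℕ → ℝ := fun v => if v ∈ S then (if x v < 0 then -1 else 1) else 0 with hy
  have habs : ∀ i, |y i| = if i ∈ S then (1:ℝ) else 0 := by
    intro i
    by_cases h : i ∈ S <;> by_cases h2 : x i < 0 <;> simp [hy, h, h2]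
  have hsupp : Function.support y ⊆ (S : Set ℕ) := by
    intro v hv
    by_contra h
    have h' : v ∉ S := fun hh => h (Finset.mem_coe.mpr hh)
    exact hv (by simp [hy, h'])
  have hfin : (Function.support y).Finite := Set.Finite.subset S.finite_toSet hsupp
  have hnorm : combNorm (perp F) y ≤ 1 := by
    rw [combNorm_le_iff]
    intro E hE
    have hsum : ∑ i ∈ E, |y i| = ((E ∩ S).card : ℝ) := by
      rw [← Finset.filter_mem_eq_inter]
      calc ∑ i ∈ E, |y i| = ∑ i ∈ E, (if i ∈ S then (1:ℝ) else 0) :=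
            Finset.sum_congr rfl (fun i _ => habs i)
        _ = ((E.filter (· ∈ S)).card : ℝ) := by
            rw [← Finset.sum_filter, Finset.sum_const, nsmul_eq_mul, mul_one]
    rw [hsum]
    rw [ENNReal.ofReal_le_one]
    exact_mod_cast hE S hS
  have hxy : ∑ᶠ n, x n * y n = ∑ i ∈ S, |x i| := by
    have hsup2 : Function.support (fun n => x n * y n) ⊆ (S : Set ℕ) := by
      intro v hv
      by_contra h
      have h' : v ∉ S := fun hh => h (Finset.mem_coe.mpr hh)
      exact hv (by simp [hy, h'])
    rw [finsum_eq_sum_of_support_subset _ hsup2]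
    apply Finset.sum_congr rfl
    intro i hi
    by_cases h2 : x i < 0
    · simp only [hy, if_pos hi, if_pos h2]
      rw [abs_of_neg h2]; ring
    · simp only [hy, if_pos hi, if_neg h2]
      rw [abs_of_nonneg (not_lt.mp h2)]; ring
  have := le_dualNorm (x := x) hfin hnorm
  rwa [hxy, abs_of_nonneg (Finset.sum_nonneg (fun i _ => abs_nonneg _))] at this

/-- Membership in `perp (cliques G)` is exactly stability. -/
lemma mem_perp_cliques_iff {G : SimpleGraph ℕ} {E : Finset ℕ} :
    E ∈ perp (cliques G) ↔ Stab G E := by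
  constructor
  · intro h u hu v hv hadj
    have hpair : ({u, v} : Finset ℕ) ∈ cliques G := by
      simp only [cliques, Set.mem_setOf_eq, Finset.coe_insert, Finset.coe_singleton]
      exact SimpleGraph.isClique_pair.mpr (fun _ => hadj)
    have := h _ hpair
    have hu' : u ∈ E ∩ ({u, v} : Finset ℕ) := by simp [hu]
    have hv' : v ∈ E ∩ ({u, v} : Finset ℕ) := by simp [hv]
    have : 1 < (E ∩ ({u, v} : Finset ℕ)).card := Finset.one_lt_card.mpr ⟨u, hu', v, hv', hadj.ne⟩
    omega
  · intro hstab S hS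
    rw [Finset.inter_comm]
    exact stab_inter_card_le hstab hS

/-! ### Direction (b) → (a) -/

lemma perfect_implies_duality {G : SimpleGraph ℕ} (hperf : IsPerfect G)
    (x : ℕ → ℝ) (hx : (Function.support x).Finite) :
    combNorm (cliques G) x = dualNorm (perp (cliques G)) x := by
  have hcov := isPerfect_iff_covH.mp hperf
  apply le_antisymm (combNorm_le_dualNorm _ _)
  rw [dualNorm_le_iff]
  intro y hyfin hy1
  set s := hx.toFinset with hs
  have hsupp : Function.support (fun n => x n * y n) ⊆ ↑s := by
    intro v hv
    rw [hs, Set.Finite.coe_toFinset]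
    intro hxv
    exact hv (by simp [Function.mem_support.mp, hxv])
  rw [finsum_eq_sum_of_support_subset _ hsupp]
  have habs : |∑ v ∈ s, x v * y v| ≤ ∑ v ∈ s, |x v| * |y v| :=
    (Finset.abs_sum_le_sum_abs _ _).trans
      (le_of_eq (Finset.sum_congr rfl fun v _ => abs_mul _ _))
  have hyE : ∀ E : Finset ℕ, Stab G E → ∑ v ∈ E, |y v| ≤ 1 := by
    intro E hE
    have hmem : E ∈ perp (cliques G) := mem_perp_cliques_iff.mpr hE
    have := combNorm_le_iff.mp hy1 E hmem
    rwa [ENNReal.ofReal_le_one] at this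
  have hkey := sum_abs_mul_le hcov x y s hyE
  obtain ⟨C0, hC0, hC0eq⟩ := Finset.exists_mem_eq_sup' (⟨∅, empty_mem_clqs (G := G) s⟩ :
    (clqs G s).Nonempty) (fun C => ∑ v ∈ C, |x v|)
  calc ENNReal.ofReal |∑ v ∈ s, x v * y v|
      ≤ ENNReal.ofReal (∑ v ∈ C0, |x v|) := by
        rw [← hC0eq]
        exact ENNReal.ofReal_le_ofReal (le_trans habs hkey)
    _ ≤ combNorm (cliques G) x :=
        le_iSup₂ (f := fun S (_ : S ∈ cliques G) => ENNReal.ofReal (∑ i ∈ S, |x i|)) C0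
          ((mem_clqs.mp hC0).2)

/-! ### Direction (a) → (b) -/

/-- From duality: `|H| ≤ α(H) * ω(H)` for every finite `H`. -/
lemma card_le_alF_mul_omF {G : SimpleGraph ℕ}
    (hd : ∀ x : ℕ → ℝ, (Function.support x).Finite →
      combNorm (cliques G) x = dualNorm (perp (cliques G)) x) (H : Finset ℕ) :
    H.card ≤ alF G H * omF G H := by
  rcases H.eq_empty_or_nonempty with rfl | ⟨v0, hv0⟩
  · simp
  have hα1 : 1 ≤ alF G H := by
    have h := le_alF (G := G) (Finset.singleton_subset_iff.mpr hv0) (by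
      intro u hu v hv hadj
      simp only [Finset.mem_singleton] at hu hv
      subst hu; subst hv
      exact G.loopless.irrefl _ hadj)
    simpa using h
  set α := alF G H with hαdef
  set ω := omF G H with hωdef
  have hαpos : (0:ℝ) < α := by exact_mod_cast hα1
  set x : ℕ → ℝ := fun v => if v ∈ H then 1 else 0 with hx
  set y : ℕ → ℝ := fun v => if v ∈ H then (α:ℝ)⁻¹ else 0 with hy
  have hxfin : (Function.support x).Finite := by
    apply Set.Finite.subset H.finite_toSet
    intro v hv
    by_contra h
    have h' : v ∉ H := fun hh => h (Finset.mem_coe.mpr hh)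
    exact hv (by simp [hx, h'])
  have hyfin : (Function.support y).Finite := by
    apply Set.Finite.subset H.finite_toSet
    intro v hv
    by_contra h
    have h' : v ∉ H := fun hh => h (Finset.mem_coe.mpr hh)
    exact hv (by simp [hy, h'])
  have hcomb : combNorm (cliques G) x ≤ ENNReal.ofReal ω := by
    rw [combNorm_le_iff]
    intro S hS
    apply ENNReal.ofReal_le_ofReal
    have hsum : ∑ i ∈ S, |x i| = ((S ∩ H).card : ℝ) := by
      rw [← Finset.filter_mem_eq_inter]
      calc ∑ i ∈ S, |x i| = ∑ i ∈ S, (if i ∈ H then (1:ℝ) else 0) :=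
            Finset.sum_congr rfl (fun i _ => by by_cases h : i ∈ H <;> simp [hx, h])
        _ = _ := by rw [← Finset.sum_filter, Finset.sum_const, nsmul_eq_mul, mul_one]
    rw [hsum]
    have hmem : S ∩ H ∈ clqs G H := mem_clqs.mpr ⟨Finset.inter_subset_right,
      (hS : G.IsClique (S : Set ℕ)).subset (by
        intro a ha
        exact Finset.mem_coe.mpr (Finset.mem_of_mem_inter_left (Finset.mem_coe.mp ha)))⟩
    exact_mod_cast le_omF hmem
  have hynorm : combNorm (perp (cliques G)) y ≤ 1 := by
    rw [combNorm_le_iff]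
    intro E hE
    have hstab : Stab G E := mem_perp_cliques_iff.mp hE
    have hsum : ∑ i ∈ E, |y i| = ((E ∩ H).card : ℝ) * (α:ℝ)⁻¹ := by
      rw [← Finset.filter_mem_eq_inter]
      calc ∑ i ∈ E, |y i| = ∑ i ∈ E, (if i ∈ H then (α:ℝ)⁻¹ else 0) :=
            Finset.sum_congr rfl (fun i _ => by
              by_cases h : i ∈ H <;>
                simp [hy, h, abs_of_nonneg (inv_nonneg.mpr hαpos.le)])
        _ = _ := by rw [← Finset.sum_filter, Finset.sum_const, nsmul_eq_mul]
    rw [hsum, ENNReal.ofReal_le_one]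
    have hcard : (E ∩ H).card ≤ α :=
      le_alF Finset.inter_subset_right (stab_subset Finset.inter_subset_left hstab)
    calc ((E ∩ H).card : ℝ) * (α:ℝ)⁻¹ ≤ (α:ℝ) * (α:ℝ)⁻¹ := by
          apply mul_le_mul_of_nonneg_right _ (inv_nonneg.mpr hαpos.le)
          exact_mod_cast hcard
      _ = 1 := mul_inv_cancel₀ (ne_of_gt hαpos)
  have hfs : ∑ᶠ n, x n * y n = (H.card : ℝ) * (α:ℝ)⁻¹ := by
    have hsupp : Function.support (fun n => x n * y n) ⊆ (H : Set ℕ) := by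
      intro v hv
      by_contra h
      have h' : v ∉ H := fun hh => h (Finset.mem_coe.mpr hh)
      exact hv (by simp [hx, hy, h'])
    rw [finsum_eq_sum_of_support_subset _ hsupp]
    calc ∑ v ∈ H, x v * y v = ∑ v ∈ H, (α:ℝ)⁻¹ :=
          Finset.sum_congr rfl (fun v hv => by simp [hx, hy, hv])
      _ = (H.card : ℝ) * (α:ℝ)⁻¹ := by rw [Finset.sum_const, nsmul_eq_mul]
  have hdn := le_dualNorm (x := x) hyfin hynorm
  rw [hfs, abs_of_nonneg (by positivity)] at hdn
  rw [← hd x hxfin] at hdn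
  have hle := le_trans hdn hcomb
  rw [ENNReal.ofReal_le_ofReal_iff (by positivity)] at hle
  have h2 := mul_le_mul_of_nonneg_right hle hαpos.le
  rw [mul_assoc, inv_mul_cancel₀ (ne_of_gt hαpos), mul_one] at h2
  have hreal : (H.card : ℝ) ≤ ((α * ω : ℕ) : ℝ) := by push_cast; nlinarith
  exact_mod_cast hreal

/-- Linear-algebra step: if `Cs t` misses `Ss t` and meets every other `Ss t'` exactly once,
then there are at most `|H|` indices. -/
lemma matrix_count {ι : Type} [Fintype ι] [DecidableEq ι] {H : Finset ℕ}
    (Cs Ss : ι → Finset ℕ) (hCsub : ∀ t, Cs t ⊆ H) (hSsub : ∀ t, Ss t ⊆ H)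
    (hdiag : ∀ t, (Cs t ∩ Ss t).card = 0)
    (hoff : ∀ t t', t ≠ t' → (Cs t ∩ Ss t').card = 1)
    (hN : 2 ≤ Fintype.card ι) : Fintype.card ι ≤ H.card := by
  set A : Matrix ι {x // x ∈ H} ℚ :=
    Matrix.of (fun t v => if (v : ℕ) ∈ Cs t then 1 else 0) with hA
  set B : Matrix {x // x ∈ H} ι ℚ :=
    Matrix.of (fun v t => if (v : ℕ) ∈ Ss t then 1 else 0) with hB
  set J : Matrix ι ι ℚ := Matrix.of (fun _ _ => 1) with hJ
  have hAB : A * B = J - 1 := by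
    ext t t'
    rw [Matrix.mul_apply]
    have h1 : ∀ v : {x // x ∈ H}, A t v * B v t'
        = if (v : ℕ) ∈ Cs t ∩ Ss t' then 1 else 0 := by
      intro v
      simp only [hA, hB, Matrix.of_apply, Finset.mem_inter]
      by_cases h1 : (v:ℕ) ∈ Cs t <;> by_cases h2 : (v:ℕ) ∈ Ss t' <;> simp [h1, h2]
    rw [Finset.sum_congr rfl (fun v _ => h1 v)]
    have hXH : Cs t ∩ Ss t' ⊆ H := Finset.inter_subset_left.trans (hCsub t)
    have h2 : ∑ v : {x // x ∈ H}, (if (v : ℕ) ∈ Cs t ∩ Ss t' then (1:ℚ) else 0)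
        = ((Cs t ∩ Ss t').card : ℚ) := by
      rw [Finset.sum_coe_sort H (fun v => if v ∈ Cs t ∩ Ss t' then (1:ℚ) else 0)]
      rw [← Finset.sum_filter, Finset.filter_mem_eq_inter, Finset.inter_eq_right.mpr hXH,
        Finset.sum_const, nsmul_eq_mul, mul_one]
    rw [h2]
    by_cases h : t = t'
    · subst h
      simp [Matrix.sub_apply, Matrix.one_apply, hJ, hdiag t]
    · simp [Matrix.sub_apply, Matrix.one_apply, hJ, h, hoff t t' h]
  have hJJ : J * J = (Fintype.card ι : ℚ) • J := by
    ext t t'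
    simp [hJ, Matrix.mul_apply, Matrix.smul_apply, Finset.sum_const, Finset.card_univ]
  set q : ℚ := ((Fintype.card ι : ℚ) - 1)⁻¹ with hq
  have hNq : (Fintype.card ι : ℚ) - 1 ≠ 0 := by
    have h2 : (2:ℚ) ≤ (Fintype.card ι : ℚ) := by exact_mod_cast hN
    intro h
    rw [sub_eq_zero] at h
    rw [h] at h2
    norm_num at h2
  have hqq : q * ((Fintype.card ι : ℚ) - 1) = 1 := inv_mul_cancel₀ hNq
  have hkey : (A * B) * (q • J - 1) = 1 := by
    rw [hAB]
    have expand : (J - 1) * (q • J - 1) = q • (J * J) - J - (q • J - 1) := by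
      rw [sub_mul, mul_sub, mul_sub]
      rw [mul_smul_comm]
      simp only [one_mul, mul_one]
    rw [expand, hJJ, smul_smul]
    have hcoef : q * (Fintype.card ι : ℚ) = 1 + q := by
      have h3 : q * (Fintype.card ι : ℚ) = q * ((Fintype.card ι : ℚ) - 1) + q := by ring
      rw [h3, hqq]
    rw [hcoef, add_smul, one_smul]
    abel
  haveI := invertibleOfRightInverse _ _ hkey
  have hunit : IsUnit (A * B) := isUnit_of_invertible _
  have hrank : (A * B).rank = Fintype.card ι := Matrix.rank_of_isUnit _ hunit
  have hle : (A * B).rank ≤ Fintype.card {x // x ∈ H} :=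
    le_trans (Matrix.rank_mul_le_left A B) (Matrix.rank_le_card_width A)
  rw [hrank, Fintype.card_coe] at hle
  exact hle

/-- Gasparian-style bound: a minimally imperfect finite set is large. -/
lemma gasparian {G : SimpleGraph ℕ} {H : Finset ℕ}
    (hmin : ∀ K : Finset ℕ, K ⊆ H → K ≠ H → CovH G K (omF G K))
    (hbad : ¬ CovH G H (omF G H)) :
    alF G H * omF G H + 1 ≤ H.card := by
  rcases H.eq_empty_or_nonempty with rfl | ⟨v0, hv0⟩
  · exact absurd ⟨fun _ => ∅, fun i => by intro u hu; simp at hu, by simp⟩ hbad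
  have hω1 : 1 ≤ omF G H := by
    have hs : ({v0} : Finset ℕ) ∈ clqs G H :=
      mem_clqs.mpr ⟨Finset.singleton_subset_iff.mpr hv0, by simp⟩
    simpa using le_omF hs
  have hα1 : 1 ≤ alF G H := by
    have h := le_alF (G := G) (Finset.singleton_subset_iff.mpr hv0) (by
      intro u hu v hv hadj
      simp only [Finset.mem_singleton] at hu hv
      subst hu; subst hv
      exact G.loopless.irrefl _ hadj)
    simpa using h
  -- (C1): for every stable set A there is an ω-clique avoiding A
  have hclq : ∀ A : Finset ℕ, Stab G A →
      ∃ C, C ⊆ H \ A ∧ G.IsClique (C : Set ℕ) ∧ C.card = omF G H := by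
    intro A hA
    by_cases hAH : (A ∩ H).Nonempty
    · obtain ⟨a, haAH⟩ := hAH
      simp only [Finset.mem_inter] at haAH
      have hKH : H \ A ⊆ H := Finset.sdiff_subset
      have hKne : H \ A ≠ H := by
        intro h
        have h2 : a ∈ H \ A := by rw [h]; exact haAH.2
        simp [haAH.1] at h2
      have hcovK := hmin _ hKH hKne
      have homK_le : omF G (H \ A) ≤ omF G H := by
        apply Finset.sup_le
        intro C hC
        exact le_omF (mem_clqs.mpr ⟨(mem_clqs.mp hC).1.trans hKH, (mem_clqs.mp hC).2⟩)
      have homK_ge : omF G H ≤ omF G (H \ A) := by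
        by_contra hcon
        push_neg at hcon
        obtain ⟨g, hstg, hcovg⟩ := hcovK
        have hcH : CovH G H (omF G (H \ A) + 1) := by
          refine ⟨fun i => if h : (i : ℕ) < omF G (H \ A) then g ⟨i, h⟩ else A,
            fun i => ?_, fun v hv => ?_⟩
          · dsimp only; split
            · exact hstg _
            · exact hA
          · by_cases hvA : v ∈ A
            · refine ⟨⟨omF G (H \ A), by omega⟩, ?_⟩
              dsimp only
              rw [dif_neg (by simp)]
              exact hvA
            · have hvK : v ∈ H \ A := Finset.mem_sdiff.mpr ⟨hv, hvA⟩
              obtain ⟨i, hi⟩ := hcovg v hvK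
              refine ⟨⟨(i : ℕ), Nat.lt_succ_of_lt i.2⟩, ?_⟩
              dsimp only
              rw [dif_pos (show ((⟨(i : ℕ), Nat.lt_succ_of_lt i.2⟩ :
                Fin (omF G (H \ A) + 1)) : ℕ) < omF G (H \ A) from i.2)]
              simpa using hi
        exact hbad (covH_mono hcH (by omega))
      obtain ⟨C, hC, hcard⟩ := exists_omF (H \ A)
      exact ⟨C, (mem_clqs.mp hC).1, (mem_clqs.mp hC).2, by omega⟩
    · obtain ⟨C, hC, hcard⟩ := exists_omF H
      rw [Finset.not_nonempty_iff_eq_empty] at hAH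
      refine ⟨C, ?_, (mem_clqs.mp hC).2, hcard⟩
      intro v hv
      rw [Finset.mem_sdiff]
      refine ⟨(mem_clqs.mp hC).1 hv, fun hvA => ?_⟩
      have hmm : v ∈ A ∩ H := Finset.mem_inter.mpr ⟨hvA, (mem_clqs.mp hC).1 hv⟩
      simp [hAH] at hmm
  -- (C2): proper colorings of H minus a point with ω colors
  have hcol : ∀ v ∈ H, ∃ c : ℕ → Fin (omF G H), ∀ u1 ∈ H.erase v, ∀ u2 ∈ H.erase v,
      G.Adj u1 u2 → c u1 ≠ c u2 := by
    intro v hv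
    have hKH : H.erase v ⊆ H := Finset.erase_subset _ _
    have hKne : H.erase v ≠ H := by
      intro h
      have h2 : v ∈ H.erase v := by rw [h]; exact hv
      simp at h2
    have homK_le : omF G (H.erase v) ≤ omF G H := by
      apply Finset.sup_le
      intro C hC
      exact le_omF (mem_clqs.mpr ⟨(mem_clqs.mp hC).1.trans hKH, (mem_clqs.mp hC).2⟩)
    obtain ⟨g, hstg, hcovg⟩ := covH_mono (hmin _ hKH hKne) homK_le
    haveI : Nonempty (Fin (omF G H)) := ⟨⟨0, by omega⟩⟩
    set c : ℕ → Fin (omF G H) :=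
      fun u => if h : ∃ i, u ∈ g i then h.choose else Classical.arbitrary _ with hc
    have hmemc : ∀ u ∈ H.erase v, u ∈ g (c u) := by
      intro u hu
      have he : ∃ i, u ∈ g i := hcovg u hu
      simp only [hc]
      rw [dif_pos he]
      exact he.choose_spec
    refine ⟨c, fun u1 h1 u2 h2 hadj heq => ?_⟩
    have hm2 : u2 ∈ g (c u1) := by rw [heq]; exact hmemc u2 h2
    exact hstg (c u1) (hmemc u1 h1) hm2 hadj
  obtain ⟨A0, hA0H, hA0st, hA0card⟩ := exists_alF H
  have hcolA : ∀ a : {x // x ∈ A0}, ∃ c : ℕ → Fin (omF G H),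
      ∀ u1 ∈ H.erase ↑a, ∀ u2 ∈ H.erase ↑a, G.Adj u1 u2 → c u1 ≠ c u2 :=
    fun a => hcol ↑a (hA0H a.2)
  set cf : {x // x ∈ A0} → ℕ → Fin (omF G H) := fun a => (hcolA a).choose with hcf
  have hcfp : ∀ a : {x // x ∈ A0}, ∀ u1 ∈ H.erase ↑a, ∀ u2 ∈ H.erase ↑a,
      G.Adj u1 u2 → cf a u1 ≠ cf a u2 := fun a => (hcolA a).choose_spec
  set Ss : Option ({x // x ∈ A0} × Fin (omF G H)) → Finset ℕ :=
    fun t => t.elim A0 (fun p => (H.erase ↑p.1).filter (fun u => cf p.1 u = p.2)) with hSs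
  have hSnone : Ss none = A0 := rfl
  have hSsome : ∀ a j, Ss (some (a, j)) = (H.erase ↑a).filter (fun u => cf a u = j) := by
    intro a j; rfl
  have hSstab : ∀ t, Stab G (Ss t) := by
    rintro (_ | ⟨a, j⟩)
    · exact hA0st
    · intro u1 h1 u2 h2 hadj
      rw [hSsome, Finset.mem_filter] at h1 h2
      exact hcfp a u1 h1.1 u2 h2.1 hadj (h1.2.trans h2.2.symm)
  have hSsub : ∀ t, Ss t ⊆ H := by
    rintro (_ | ⟨a, j⟩)
    · exact hA0H
    · rw [hSsome]
      exact (Finset.filter_subset _ _).trans (Finset.erase_subset _ _)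
  have hCex : ∀ t, ∃ C, C ⊆ H \ Ss t ∧ G.IsClique (C : Set ℕ) ∧ C.card = omF G H :=
    fun t => hclq (Ss t) (hSstab t)
  set Cs : Option ({x // x ∈ A0} × Fin (omF G H)) → Finset ℕ :=
    fun t => (hCex t).choose with hCsdef
  have hCsub : ∀ t, Cs t ⊆ H \ Ss t := fun t => (hCex t).choose_spec.1
  have hCclq : ∀ t, G.IsClique ((Cs t) : Set ℕ) := fun t => (hCex t).choose_spec.2.1
  have hCcard : ∀ t, (Cs t).card = omF G H := fun t => (hCex t).choose_spec.2.2
  have hcard_ι : Fintype.card (Option ({x // x ∈ A0} × Fin (omF G H)))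
      = alF G H * omF G H + 1 := by
    simp [Fintype.card_option, Fintype.card_prod, Fintype.card_coe, hA0card]
  -- key counting
  have hKC : ∀ C : Finset ℕ, C ⊆ H → G.IsClique (C : Set ℕ) → C.card = omF G H →
      ∑ t : Option ({x // x ∈ A0} × Fin (omF G H)), (C ∩ Ss t).card
        = alF G H * omF G H := by
    intro C hCH hCclq' hCcard'
    rw [Fintype.sum_option]
    have hsome : ∀ a : {x // x ∈ A0}, ∑ j : Fin (omF G H), (C ∩ Ss (some (a, j))).card
        = C.card - (if (a:ℕ) ∈ C then 1 else 0) := by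
      intro a
      have h1 : ∀ j, C ∩ Ss (some (a, j)) = (C ∩ H.erase ↑a).filter (fun u => cf a u = j) := by
        intro j
        rw [hSsome]
        ext u
        simp only [Finset.mem_inter, Finset.mem_filter]
        tauto
      have h2 : ∑ j : Fin (omF G H), (C ∩ Ss (some (a, j))).card
          = (C ∩ H.erase ↑a).card := by
        rw [Finset.sum_congr rfl (fun j _ => by rw [h1 j])]
        exact (Finset.card_eq_sum_card_fiberwise
          (fun u _ => Finset.mem_univ (cf a u))).symm
      rw [h2]
      have h3 : C ∩ H.erase ↑a = C.erase ↑a := by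
        ext u
        simp only [Finset.mem_inter, Finset.mem_erase]
        constructor
        · rintro ⟨h4, h5, h6⟩; exact ⟨h5, h4⟩
        · rintro ⟨h4, h5⟩; exact ⟨h5, h4, hCH h5⟩
      rw [h3]
      by_cases hac : (a:ℕ) ∈ C
      · rw [Finset.card_erase_of_mem hac]; simp [hac]
      · rw [Finset.erase_eq_of_notMem hac]; simp [hac]
    rw [Fintype.sum_prod_type]
    rw [Finset.sum_congr rfl (fun a _ => hsome a)]
    have hS2 : ∑ a : {x // x ∈ A0}, (if (a:ℕ) ∈ C then 1 else 0) = (A0 ∩ C).card := by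
      rw [Finset.sum_coe_sort A0 (fun v => if v ∈ C then 1 else 0)]
      rw [← Finset.card_filter, Finset.filter_mem_eq_inter]
    have hS12 : (∑ a : {x // x ∈ A0}, (C.card - (if (a:ℕ) ∈ C then 1 else 0)))
        + ∑ a : {x // x ∈ A0}, (if (a:ℕ) ∈ C then 1 else 0)
        = alF G H * omF G H := by
      rw [← Finset.sum_add_distrib]
      have hpt : ∀ a : {x // x ∈ A0},
          (C.card - (if (a:ℕ) ∈ C then 1 else 0)) + (if (a:ℕ) ∈ C then 1 else 0)
          = omF G H := by
        intro a
        by_cases h : (a:ℕ) ∈ C <;> simp [h, hCcard'] <;> omega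
      rw [Finset.sum_congr rfl (fun a _ => hpt a), Finset.sum_const, Finset.card_univ,
        Fintype.card_coe, hA0card, smul_eq_mul]
    have hcomm : (C ∩ Ss none).card = (A0 ∩ C).card := by
      rw [hSnone, Finset.inter_comm]
    omega
  have hdiag : ∀ t, (Cs t ∩ Ss t).card = 0 := by
    intro t
    rw [Finset.card_eq_zero, Finset.eq_empty_iff_forall_notMem]
    intro u hu
    rw [Finset.mem_inter] at hu
    have h2 := hCsub t hu.1
    rw [Finset.mem_sdiff] at h2
    exact h2.2 hu.2
  have hαω1 : 1 ≤ alF G H * omF G H := Nat.one_le_iff_ne_zero.mpr (by positivity)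
  have hoff : ∀ t t', t ≠ t' → (Cs t ∩ Ss t').card = 1 := by
    intro t t' hne
    have hsum := hKC (Cs t) ((hCsub t).trans Finset.sdiff_subset) (hCclq t) (hCcard t)
    have hone : ∀ t'', (Cs t ∩ Ss t'').card ≤ 1 :=
      fun t'' => stab_inter_card_le (hSstab t'') (hCclq t)
    by_contra hc
    have hzero : (Cs t ∩ Ss t').card = 0 := by have := hone t'; omega
    have hsplit : ∑ t'' : Option ({x // x ∈ A0} × Fin (omF G H)), (Cs t ∩ Ss t'').card
        = (Cs t ∩ Ss t).card + ∑ t'' ∈ Finset.univ.erase t, (Cs t ∩ Ss t'').card :=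
      (Finset.add_sum_erase _ _ (Finset.mem_univ t)).symm
    have ht'mem : t' ∈ Finset.univ.erase t :=
      Finset.mem_erase.mpr ⟨fun h => hne h.symm, Finset.mem_univ _⟩
    have hsplit2 : ∑ t'' ∈ Finset.univ.erase t, (Cs t ∩ Ss t'').card
        = (Cs t ∩ Ss t').card + ∑ t'' ∈ (Finset.univ.erase t).erase t', (Cs t ∩ Ss t'').card :=
      (Finset.add_sum_erase _ _ ht'mem).symm
    have hbound : ∑ t'' ∈ (Finset.univ.erase t).erase t', (Cs t ∩ Ss t'').card
        ≤ ((Finset.univ.erase t).erase t').card • 1 :=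
      Finset.sum_le_card_nsmul _ _ 1 (fun i _ => hone i)
    have hc1 : ((Finset.univ.erase t).erase t').card = alF G H * omF G H + 1 - 2 := by
      rw [Finset.card_erase_of_mem ht'mem, Finset.card_erase_of_mem (Finset.mem_univ _),
        Finset.card_univ, hcard_ι]
      omega
    rw [hc1, smul_eq_mul, mul_one] at hbound
    have hd0 := hdiag t
    omega
  have hres := matrix_count Cs Ss (fun t => (hCsub t).trans Finset.sdiff_subset) hSsub
    hdiag hoff (by rw [hcard_ι]; omega)
  rw [hcard_ι] at hres
  exact hres

lemma duality_implies_perfect {F : Set (Finset ℕ)} (hF : FHC F)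
    (hd : ∀ x : ℕ → ℝ, (Function.support x).Finite → combNorm F x = dualNorm (perp F) x) :
    ∃ G : SimpleGraph ℕ, IsPerfect G ∧ F = cliques G := by
  set G := SimpleGraph.fromRel (fun n m => ({n, m} : Finset ℕ) ∈ F) with hG
  have hFG : F = cliques G := by
    ext S
    simp only [cliques, Set.mem_setOf_eq]
    constructor
    · intro hS u hu v hv huv
      rw [Finset.mem_coe] at hu hv
      rw [hG, SimpleGraph.fromRel_adj]
      refine ⟨huv, Or.inl ?_⟩
      refine hF.1 ?_ hS
      rw [Finset.insert_subset_iff, Finset.singleton_subset_iff]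
      exact ⟨hu, hv⟩
    · intro hS
      by_contra hSF
      by_cases h1 : S.card ≤ 1
      · obtain ⟨a, ha⟩ := Finset.card_le_one_iff_subset_singleton.mp h1
        exact hSF (hF.1 ha (hF.2 a))
      · push_neg at h1
        set x : ℕ → ℝ := fun v => if v ∈ S then 1 else 0 with hx
        have hxfin : (Function.support x).Finite := by
          apply Set.Finite.subset S.finite_toSet
          intro v hv
          by_contra h
          have h' : v ∉ S := fun hh => h (Finset.mem_coe.mpr hh)
          exact hv (by simp [hx, h'])
        have hsumTS : ∀ T : Finset ℕ, ∑ i ∈ T, |x i| = ((T ∩ S).card : ℝ) := by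
          intro T
          rw [← Finset.filter_mem_eq_inter]
          calc ∑ i ∈ T, |x i| = ∑ i ∈ T, (if i ∈ S then (1:ℝ) else 0) :=
                Finset.sum_congr rfl (fun i _ => by by_cases h : i ∈ S <;> simp [hx, h])
            _ = _ := by rw [← Finset.sum_filter, Finset.sum_const, nsmul_eq_mul, mul_one]
        have hcomb : combNorm F x ≤ ENNReal.ofReal ((S.card : ℝ) - 1) := by
          rw [combNorm_le_iff]
          intro T hT
          apply ENNReal.ofReal_le_ofReal
          rw [hsumTS T]
          have hsubS : T ∩ S ⊆ S := Finset.inter_subset_right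
          have hmemF : T ∩ S ∈ F := hF.1 Finset.inter_subset_left hT
          have hne : T ∩ S ≠ S := fun h => hSF (h ▸ hmemF)
          have hlt : (T ∩ S).card < S.card := Finset.card_lt_card (hsubS.ssubset_of_ne hne)
          have h3 : ((T ∩ S).card : ℝ) + 1 ≤ (S.card : ℝ) := by exact_mod_cast hlt
          linarith
        have hynorm : combNorm (perp F) x ≤ 1 := by
          rw [combNorm_le_iff]
          intro E hE
          rw [hsumTS E, ENNReal.ofReal_le_one]
          have hcard : (E ∩ S).card ≤ 1 := by
            by_contra hc
            push_neg at hc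
            obtain ⟨a, ha, b, hb, hab⟩ := Finset.one_lt_card.mp hc
            simp only [Finset.mem_inter] at ha hb
            have hpair : ({a, b} : Finset ℕ) ∈ F := by
              have hadj : G.Adj a b :=
                hS (Finset.mem_coe.mpr ha.2) (Finset.mem_coe.mpr hb.2) hab
              rw [hG, SimpleGraph.fromRel_adj] at hadj
              rcases hadj.2 with h | h
              · exact h
              · rwa [Finset.pair_comm]
            have := hE _ hpair
            have h2 : 1 < (E ∩ ({a, b} : Finset ℕ)).card := by
              apply Finset.one_lt_card.mpr
              exact ⟨a, by simp [ha.1], b, by simp [hb.1], hab⟩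
            omega
          exact_mod_cast hcard
        have hfs : ∑ᶠ n, x n * x n = (S.card : ℝ) := by
          have hsupp : Function.support (fun n => x n * x n) ⊆ (S : Set ℕ) := by
            intro v hv
            by_contra h
            have h' : v ∉ S := fun hh => h (Finset.mem_coe.mpr hh)
            exact hv (by simp [hx, h'])
          rw [finsum_eq_sum_of_support_subset _ hsupp]
          calc ∑ v ∈ S, x v * x v = ∑ v ∈ S, (1:ℝ) :=
                Finset.sum_congr rfl (fun v hv => by simp [hx, hv])
            _ = (S.card : ℝ) := by rw [Finset.sum_const, nsmul_eq_mul, mul_one]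
        have hdn := le_dualNorm (x := x) hxfin hynorm
        rw [hfs, abs_of_nonneg (by positivity)] at hdn
        rw [← hd x hxfin] at hdn
        have hle := le_trans hdn hcomb
        rw [ENNReal.ofReal_le_ofReal_iff (by
          have : (1:ℝ) < (S.card : ℝ) := by exact_mod_cast h1
          linarith)] at hle
        linarith
  refine ⟨G, ?_, hFG⟩
  rw [hFG] at hd
  rw [isPerfect_iff_covH]
  suffices hs : ∀ n (H : Finset ℕ), H.card = n → CovH G H (omF G H) from fun H => hs _ H rfl
  intro n
  induction n using Nat.strong_induction_on with
  | _ n IH =>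
  intro H hn
  by_contra hbad
  have hmin : ∀ K : Finset ℕ, K ⊆ H → K ≠ H → CovH G K (omF G K) := by
    intro K hK hne
    have hlt : K.card < n := hn ▸ Finset.card_lt_card (hK.ssubset_of_ne hne)
    exact IH K.card hlt K rfl
  have h1 := gasparian hmin hbad
  have h2 := card_le_alF_mul_omF hd H
  omega

theorem stmt_4 (F : Set (Finset ℕ)) (hF : FHC F) :
    (∀ x : ℕ → ℝ, (Function.support x).Finite → combNorm F x = dualNorm (perp F) x) ↔
    ∃ G : SimpleGraph ℕ, IsPerfect G ∧ F = cliques G := by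
  constructor
  · intro hd
    exact duality_implies_perfect hF hd
  · rintro ⟨G, hperf, rfl⟩
    exact perfect_implies_duality hperf
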